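/- arXiv:1409.4234 — 8 statements merged into one kernel-verified Lean document; each statement's English description precedes it below -/
import Mathlib

section
/- Let N ≥ 2 and let a : Fin N → Fin N → ℝ be nonnegative weights with a k k = 0 for all k, and let L be the associated Laplacian matrix. If the associated directed graph is connected (there exists a node v from which every node is reachable), then 0 is an eigenvalue of L of algebraic multiplicity exactly 1 (i.e., 0 is a root of multiplicity 1 of the characteristic polynomial of L viewed over ℂ), and every nonzero eigenvalue λ of L satisfies Re λ > 0. -/
open Matrix Polynomial

/-- The Laplacian matrix associated to the weights `a`. -/
def lapMatrix {N : ℕ} (a : Fin N → Fin N → ℝ) : Matrix (Fin N) (Fin N) ℝ :=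
  Matrix.of fun k j => if k = j then ∑ m, a k m else -(a k j)

/-- Edge relation of the associated directed graph: there is an edge from node `j` to
node `k` iff `a k j > 0`. -/
def lapEdge {N : ℕ} (a : Fin N → Fin N → ℝ) (j k : Fin N) : Prop := 0 < a k j

/-- Connectivity: there is a node `v` from which every node is reachable. -/
def lapConnected {N : ℕ} (a : Fin N → Fin N → ℝ) : Prop :=
  ∃ v : Fin N, ∀ k : Fin N, Relation.ReflTransGen (lapEdge a) v k

/-! ### Auxiliary lemmas -/

lemma lapMatrix_map_ofReal {N : ℕ} (a : Fin N → Fin N → ℝ) :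
    (lapMatrix a).map Complex.ofReal
      = Matrix.of fun k j => if k = j then ∑ m, ((a k m : ℂ)) else -((a k j : ℂ)) := by
  ext k j
  simp [lapMatrix, Matrix.map_apply, apply_ite Complex.ofReal]

lemma lapGen_mulVec {N : ℕ} {F : Type*} [Field F] (b : Fin N → Fin N → F)
    (hb : ∀ k, b k k = 0) (x : Fin N → F) (k : Fin N) :
    ((Matrix.of fun k j => if k = j then ∑ m, b k m else -(b k j)) *ᵥ x) k
      = ∑ m, b k m * (x k - x m) := by
  classical
  simp only [mulVec, dotProduct, of_apply]
  have h : ∀ j : Fin N, (if k = j then (∑ m, b k m) else -(b k j)) * x j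
      = b k j * (x k - x j)
        + ((if k = j then ((∑ m, b k m) + b k j) else 0) * x k - b k j * x k) := by
    intro j
    split
    · next h => subst h; ring
    · ring
  rw [Finset.sum_congr rfl fun j _ => h j, Finset.sum_add_distrib, Finset.sum_sub_distrib,
    ← Finset.sum_mul, ← Finset.sum_mul, Finset.sum_ite_eq Finset.univ k
      (fun j => (∑ m, b k m) + b k j)]
  simp [hb k]

lemma lapC_mulVec {N : ℕ} (a : Fin N → Fin N → ℝ) (hdiag : ∀ k, a k k = 0)
    (z : Fin N → ℂ) (k : Fin N) :
    (((lapMatrix a).map Complex.ofReal) *ᵥ z) k = ∑ m, (a k m : ℂ) * (z k - z m) := by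
  rw [lapMatrix_map_ofReal]
  exact lapGen_mulVec (fun k j => (a k j : ℂ)) (fun k => by simp [hdiag k]) z k

lemma lapC_re {N : ℕ} (a : Fin N → Fin N → ℝ) (z : Fin N → ℂ) (k : Fin N) :
    (∑ m, (a k m : ℂ) * (z k - z m)).re = ∑ m, a k m * ((z k).re - (z m).re) := by
  rw [Complex.re_sum]
  exact Finset.sum_congr rfl fun m _ => by simp [Complex.mul_re]

lemma lapC_im {N : ℕ} (a : Fin N → Fin N → ℝ) (z : Fin N → ℂ) (k : Fin N) :
    (∑ m, (a k m : ℂ) * (z k - z m)).im = ∑ m, a k m * ((z k).im - (z m).im) := by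
  rw [Complex.im_sum]
  exact Finset.sum_congr rfl fun m _ => by simp [Complex.mul_im]

/-- If all row "discrepancies" are the same constant, that constant is zero. -/
lemma lap_const_eq_zero {N : ℕ} (hN : 0 < N) (a : Fin N → Fin N → ℝ)
    (hnonneg : ∀ k j, 0 ≤ a k j)
    (x : Fin N → ℝ) (c : ℝ) (h : ∀ k, ∑ m, a k m * (x k - x m) = c) : c = 0 := by
  have hne : (Finset.univ : Finset (Fin N)).Nonempty := ⟨⟨0, hN⟩, Finset.mem_univ _⟩
  obtain ⟨kM, -, hM⟩ := Finset.exists_max_image Finset.univ x hne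
  obtain ⟨km, -, hm⟩ := Finset.exists_min_image Finset.univ x hne
  have h1 : 0 ≤ c := (h kM) ▸ Finset.sum_nonneg fun m _ =>
    mul_nonneg (hnonneg _ _) (sub_nonneg.2 (hM m (Finset.mem_univ m)))
  have h2 : c ≤ 0 := (h km) ▸ Finset.sum_nonpos fun m _ =>
    mul_nonpos_of_nonneg_of_nonpos (hnonneg _ _) (sub_nonpos.2 (hm m (Finset.mem_univ m)))
  linarith

/-- Maximum principle: a real vector in the kernel of a connected Laplacian is constant. -/
lemma lap_ker_const {N : ℕ} (hN : 0 < N) (a : Fin N → Fin N → ℝ)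
    (hnonneg : ∀ k j, 0 ≤ a k j)
    (v : Fin N) (hconn : ∀ k : Fin N, Relation.ReflTransGen (lapEdge a) v k)
    (x : Fin N → ℝ) (h : ∀ k, ∑ m, a k m * (x k - x m) = 0) :
    ∀ k, x k = x v := by
  have hne : (Finset.univ : Finset (Fin N)).Nonempty := ⟨⟨0, hN⟩, Finset.mem_univ _⟩
  have claimM : ∀ k : Fin N, (∀ m, x m ≤ x k) → ∀ j, 0 < a k j → ∀ m, x m ≤ x j := by
    intro k hk j hj m
    have hterm : ∀ i ∈ Finset.univ, 0 ≤ a k i * (x k - x i) := fun i _ =>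
      mul_nonneg (hnonneg _ _) (sub_nonneg.2 (hk i))
    have := (Finset.sum_eq_zero_iff_of_nonneg hterm).1 (h k) j (Finset.mem_univ j)
    have hxj : x j = x k := by
      rcases mul_eq_zero.1 this with h' | h'
      · exact absurd h' (ne_of_gt hj)
      · linarith [sub_eq_zero.1 h']
    rw [hxj]; exact hk m
  have claimMin : ∀ k : Fin N, (∀ m, x k ≤ x m) → ∀ j, 0 < a k j → ∀ m, x j ≤ x m := by
    intro k hk j hj m
    have hterm : ∀ i ∈ Finset.univ, a k i * (x k - x i) ≤ 0 := fun i _ =>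
      mul_nonpos_of_nonneg_of_nonpos (hnonneg _ _) (sub_nonpos.2 (hk i))
    have := (Finset.sum_eq_zero_iff_of_nonpos hterm).1 (h k) j (Finset.mem_univ j)
    have hxj : x j = x k := by
      rcases mul_eq_zero.1 this with h' | h'
      · exact absurd h' (ne_of_gt hj)
      · linarith [sub_eq_zero.1 h']
    rw [hxj]; exact hk m
  obtain ⟨kM, -, hM⟩ := Finset.exists_max_image Finset.univ x hne
  obtain ⟨km, -, hm⟩ := Finset.exists_min_image Finset.univ x hne
  have hMuniv : ∀ m, x m ≤ x kM := fun m => hM m (Finset.mem_univ m)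
  have hmuniv : ∀ m, x km ≤ x m := fun m => hm m (Finset.mem_univ m)
  have backM : ∀ j, Relation.ReflTransGen (lapEdge a) j kM → ∀ m, x m ≤ x j := by
    intro j hpath
    induction hpath using Relation.ReflTransGen.head_induction_on with
    | refl => exact hMuniv
    | head h' _ ih => exact claimM _ ih _ h'
  have backm : ∀ j, Relation.ReflTransGen (lapEdge a) j km → ∀ m, x j ≤ x m := by
    intro j hpath
    induction hpath using Relation.ReflTransGen.head_induction_on with
    | refl => exact hmuniv
    | head h' _ ih => exact claimMin _ ih _ h'
  have h1 := backM v (hconn kM)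
  have h2 := backm v (hconn km)
  intro k
  exact le_antisymm (h1 k) (h2 k)

lemma charpoly_eval' {N : ℕ} (M : Matrix (Fin N) (Fin N) ℂ) (r : ℂ) :
    M.charpoly.eval r = (Matrix.scalar (Fin N) r - M).det := by
  rw [Matrix.charpoly, eval_det, matPolyEquiv_charmatrix]
  simp

lemma charpoly_toLin' {N : ℕ} (M : Matrix (Fin N) (Fin N) ℂ) :
    (Matrix.toLin' M).charpoly = M.charpoly := by
  rw [← LinearMap.charpoly_toMatrix (Matrix.toLin' M) (Pi.basisFun ℂ (Fin N)),
    LinearMap.toMatrix_eq_toMatrix', LinearMap.toMatrix'_toLin']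

/-- Gershgorin-type estimate: nonzero roots of the characteristic polynomial have
positive real part. -/
lemma lap_re_pos {N : ℕ} (hN : 0 < N) (a : Fin N → Fin N → ℝ)
    (hnonneg : ∀ k j, 0 ≤ a k j) (hdiag : ∀ k, a k k = 0) (lam : ℂ)
    (hroot : (((lapMatrix a).map Complex.ofReal).charpoly).IsRoot lam) (hlam : lam ≠ 0) :
    0 < lam.re := by
  classical
  set L := (lapMatrix a).map Complex.ofReal with hL
  have hdet : (Matrix.scalar (Fin N) lam - L).det = 0 := by
    rw [← charpoly_eval' L lam]; exact hroot
  obtain ⟨v, hv0, hveq⟩ := (Matrix.exists_mulVec_eq_zero_iff).2 hdet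
  have heq : ∀ k, lam * v k = ∑ m, (a k m : ℂ) * (v k - v m) := by
    intro k
    have h1 : Matrix.scalar (Fin N) lam *ᵥ v = L *ᵥ v := by
      have h := hveq
      rw [Matrix.sub_mulVec] at h
      exact sub_eq_zero.1 h
    have h2 := congrFun h1 k
    rw [hL, lapC_mulVec a hdiag v k] at h2
    simpa [Matrix.scalar, Matrix.mulVec_diagonal] using h2
  obtain ⟨k, -, hk⟩ := Finset.exists_max_image Finset.univ (fun j => ‖v j‖)
    ⟨⟨0, hN⟩, Finset.mem_univ _⟩
  have hk' : ∀ m, ‖v m‖ ≤ ‖v k‖ := fun m => hk m (Finset.mem_univ m)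
  have hvk : 0 < ‖v k‖ := by
    obtain ⟨j, hj⟩ := Function.ne_iff.1 hv0
    exact lt_of_lt_of_le (by simpa using hj) (hk' j)
  set c : ℝ := ∑ m, a k m with hc
  have hc0 : 0 ≤ c := Finset.sum_nonneg fun m _ => hnonneg _ _
  have key : (lam - (c : ℂ)) * v k = -∑ m, (a k m : ℂ) * v m := by
    have h := heq k
    have hsplit : (∑ m, (a k m : ℂ) * (v k - v m))
        = (∑ m, (a k m : ℂ)) * v k - ∑ m, (a k m : ℂ) * v m := by
      rw [Finset.sum_mul, ← Finset.sum_sub_distrib]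
      exact Finset.sum_congr rfl fun m _ => by ring
    rw [hsplit] at h
    have hcc : ((c : ℝ) : ℂ) = ∑ m, (a k m : ℂ) := by rw [hc]; push_cast; ring
    rw [hcc]
    linear_combination h
  have habs : ‖lam - (c : ℂ)‖ * ‖v k‖ ≤ c * ‖v k‖ := by
    calc ‖lam - (c : ℂ)‖ * ‖v k‖
        = ‖(lam - (c : ℂ)) * v k‖ := (norm_mul _ _).symm
      _ = ‖∑ m, (a k m : ℂ) * v m‖ := by rw [key, norm_neg]
      _ ≤ ∑ m, ‖(a k m : ℂ) * v m‖ := norm_sum_le _ _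
      _ = ∑ m, a k m * ‖v m‖ := by
          refine Finset.sum_congr rfl fun m _ => ?_
          rw [norm_mul, Complex.norm_real, Real.norm_of_nonneg (hnonneg k m)]
      _ ≤ ∑ m, a k m * ‖v k‖ :=
          Finset.sum_le_sum fun m _ => mul_le_mul_of_nonneg_left (hk' m) (hnonneg k m)
      _ = c * ‖v k‖ := by rw [← Finset.sum_mul]
  have hle : ‖lam - (c : ℂ)‖ ≤ c := le_of_mul_le_mul_right habs hvk
  have hsq : (lam.re - c) ^ 2 + lam.im ^ 2 ≤ c ^ 2 := by
    have h1 : ‖lam - (c : ℂ)‖ ^ 2 ≤ c ^ 2 :=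
      pow_le_pow_left₀ (norm_nonneg _) hle 2
    rw [Complex.sq_norm, Complex.normSq_apply] at h1
    simp only [Complex.sub_re, Complex.ofReal_re, Complex.sub_im, Complex.ofReal_im,
      sub_zero] at h1
    nlinarith [h1]
  have hpos : 0 < lam.re ^ 2 + lam.im ^ 2 := by
    have : lam.re ≠ 0 ∨ lam.im ≠ 0 := by
      by_contra hcon
      push_neg at hcon
      exact hlam (Complex.ext hcon.1 (by simpa using hcon.2))
    rcases this with h' | h'
    · nlinarith [sq_nonneg lam.im, sq_pos_of_ne_zero h']
    · nlinarith [sq_nonneg lam.re, sq_pos_of_ne_zero h']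
  by_contra hre
  push_neg at hre
  nlinarith [hsq, hpos, hc0, mul_nonpos_of_nonneg_of_nonpos hc0 hre]

theorem stmt0 {N : ℕ} (hN : 2 ≤ N) (a : Fin N → Fin N → ℝ)
    (hnonneg : ∀ k j, 0 ≤ a k j) (hdiag : ∀ k, a k k = 0)
    (hconn : lapConnected a) :
    (((lapMatrix a).map Complex.ofReal).charpoly).rootMultiplicity 0 = 1 ∧
    ∀ lam : ℂ, (((lapMatrix a).map Complex.ofReal).charpoly).IsRoot lam →
      lam ≠ 0 → 0 < lam.re := by
  classical
  have hN0 : 0 < N := by omega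
  obtain ⟨v, hv⟩ := hconn
  set L := (lapMatrix a).map Complex.ofReal with hL
  refine ⟨?_, fun lam hroot hlam => lap_re_pos hN0 a hnonneg hdiag lam hroot hlam⟩
  -- Part 1: the algebraic multiplicity of 0 is 1.
  set φ : Module.End ℂ (Fin N → ℂ) := Matrix.toLin' L with hφdef
  have hφ : ∀ z, φ z = L *ᵥ z := fun z => Matrix.toLin'_apply _ _
  -- the kernel consists of constant vectors
  have hker : ∀ z : Fin N → ℂ, φ z = 0 → ∃ t : ℂ, z = fun _ => t := by
    intro z hz
    have hz' : ∀ k, ∑ m, (a k m : ℂ) * (z k - z m) = 0 := by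
      intro k
      rw [← lapC_mulVec a hdiag z k, ← hφ]
      exact congrFun hz k
    have hre : ∀ k, ∑ m, a k m * ((z k).re - (z m).re) = 0 := by
      intro k
      rw [← lapC_re a z k, hz' k, Complex.zero_re]
    have him : ∀ k, ∑ m, a k m * ((z k).im - (z m).im) = 0 := by
      intro k
      rw [← lapC_im a z k, hz' k, Complex.zero_im]
    have h1 := lap_ker_const hN0 a hnonneg v hv _ hre
    have h2 := lap_ker_const hN0 a hnonneg v hv _ him
    exact ⟨z v, funext fun k => Complex.ext (h1 k) (h2 k)⟩
  -- constants map to constants only through zero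
  have hconst : ∀ (z : Fin N → ℂ) (t : ℂ), φ z = (fun _ => t) → t = 0 := by
    intro z t hz
    have hz' : ∀ k, ∑ m, (a k m : ℂ) * (z k - z m) = t := by
      intro k
      rw [← lapC_mulVec a hdiag z k, ← hφ]
      exact congrFun hz k
    have hre : ∀ k, ∑ m, a k m * ((z k).re - (z m).re) = t.re := by
      intro k; rw [← lapC_re a z k, hz' k]
    have him : ∀ k, ∑ m, a k m * ((z k).im - (z m).im) = t.im := by
      intro k; rw [← lapC_im a z k, hz' k]
    have h1 := lap_const_eq_zero hN0 a hnonneg _ _ hre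
    have h2 := lap_const_eq_zero hN0 a hnonneg _ _ him
    exact Complex.ext h1 h2
  have hone : φ (fun _ => (1 : ℂ)) = 0 := by
    funext k
    rw [hφ, hL, lapC_mulVec a hdiag]
    simp
  have hsq : ∀ z, φ (φ z) = 0 → φ z = 0 := by
    intro z h
    obtain ⟨t, ht⟩ := hker _ h
    have := hconst z t ht
    rw [ht, this]
    rfl
  have hpow : ∀ (n : ℕ) (z : Fin N → ℂ), (φ ^ n) z = 0 → φ z = 0 := by
    intro n
    induction n with
    | zero => intro z h; simp only [pow_zero, Module.End.one_apply] at h; rw [h, map_zero]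
    | succ n ih =>
      intro z h
      rw [pow_succ, Module.End.mul_apply] at h
      exact hsq z (ih (φ z) h)
  have h1ne : (fun _ => (1 : ℂ)) ≠ (0 : Fin N → ℂ) := by
    intro h
    have := congrFun h ⟨0, hN0⟩
    simp at this
  have hspace : φ.maxGenEigenspace 0 = Submodule.span ℂ {(fun _ => (1 : ℂ))} := by
    ext z
    rw [Module.End.mem_maxGenEigenspace]
    simp only [zero_smul, sub_zero]
    constructor
    · rintro ⟨n, hn⟩
      obtain ⟨t, ht⟩ := hker z (hpow n z hn)
      rw [ht]
      exact Submodule.mem_span_singleton.2 ⟨t, by funext j; simp⟩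
    · intro hz
      obtain ⟨t, ht⟩ := Submodule.mem_span_singleton.1 hz
      refine ⟨1, ?_⟩
      rw [pow_one, ← ht, _root_.map_smul, hone, smul_zero]
  have hcp : φ.charpoly = L.charpoly := _root_.charpoly_toLin' L
  rw [Polynomial.rootMultiplicity_eq_natTrailingDegree', ← hcp,
    ← LinearMap.finrank_maxGenEigenspace_zero_eq, hspace]
  exact finrank_span_singleton h1ne
end

section
/- Let N ≥ 2 and let a : Fin N → Fin N → ℝ be nonnegative weights with a k k = 0 for all k, and let L be the associated Laplacian matrix. If the associated directed graph is not connected, then the algebraic multiplicity ρ of the eigenvalue 0 of L satisfies 2 ≤ ρ ≤ N, and every nonzero eigenvalue λ of L satisfies Re λ > 0. -/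
open Matrix Polynomial

lemma charpoly_factor_closed {n : Type*} [Fintype n] [DecidableEq n]
    (M : Matrix n n ℂ) (p : n → Prop) [DecidablePred p]
    [Fintype {x // p x}] [Fintype {x // ¬ p x}]
    (hclosed : ∀ i j, p i → ¬ p j → M i j = 0) :
    M.charpoly =
      (M.submatrix (Subtype.val : {x // p x} → n) Subtype.val).charpoly *
      (M.submatrix (Subtype.val : {x // ¬ p x} → n) Subtype.val).charpoly := by
  let e : {x // p x} ⊕ {x // ¬ p x} ≃ n := Equiv.sumCompl p
  have h1 : reindex e e (M.submatrix ⇑e ⇑e) = M := by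
    ext i j
    simp
  have h2 : M.submatrix ⇑e ⇑e =
      fromBlocks (M.submatrix (Subtype.val : {x // p x} → n) Subtype.val) 0
        (M.submatrix (Subtype.val : {x // ¬ p x} → n) (Subtype.val : {x // p x} → n))
        (M.submatrix (Subtype.val : {x // ¬ p x} → n) Subtype.val) := by
    ext i j
    cases i with
    | inl i =>
      cases j with
      | inl j => simp [e]
      | inr j => simpa [e] using hclosed i j i.2 j.2
    | inr i =>
      cases j with
      | inl j => simp [e]
      | inr j => simp [e]
  conv_lhs => rw [← h1, charpoly_reindex, h2, charpoly_fromBlocks_zero₁₂]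

lemma X_dvd_charpoly_rowsum {m : Type*} [Fintype m] [DecidableEq m] [Nonempty m]
    (A : Matrix m m ℂ) (h : ∀ i, ∑ j, A i j = 0) : X ∣ A.charpoly := by
  rw [Polynomial.X_dvd_iff]
  have hdet : A.det = 0 := by
    rw [← Matrix.exists_mulVec_eq_zero_iff]
    refine ⟨fun _ => 1, ?_, ?_⟩
    · intro h0
      have := congrFun h0 (Classical.arbitrary m)
      simp at this
    · ext i
      simpa [Matrix.mulVec, dotProduct] using h i
  have h2 := Matrix.det_eq_sign_charpoly_coeff A
  rw [hdet] at h2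
  have h3 : ((-1 : ℂ)) ^ Fintype.card m ≠ 0 := by simp
  rcases mul_eq_zero.mp h2.symm with h | h
  · exact absurd h h3
  · exact h

set_option maxHeartbeats 2000000 in
theorem stmt1 {N : ℕ} (hN : 2 ≤ N) (a : Fin N → Fin N → ℝ)
    (hnonneg : ∀ k j, 0 ≤ a k j) (hdiag : ∀ k, a k k = 0)
    (hnconn : ¬ lapConnected a) :
    (2 ≤ (((lapMatrix a).map Complex.ofReal).charpoly).rootMultiplicity 0 ∧
      (((lapMatrix a).map Complex.ofReal).charpoly).rootMultiplicity 0 ≤ N) ∧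
    ∀ lam : ℂ, (((lapMatrix a).map Complex.ofReal).charpoly).IsRoot lam →
      lam ≠ 0 → 0 < lam.re := by
  classical
  haveI : Nonempty (Fin N) := ⟨⟨0, by omega⟩⟩
  set M : Matrix (Fin N) (Fin N) ℂ := (lapMatrix a).map Complex.ofReal with hM
  -- row sums are zero
  have hrowR : ∀ k, ∑ j, lapMatrix a k j = 0 := by
    intro k
    have h1 : ∑ j ∈ Finset.univ.erase k, a k j = ∑ j, a k j := by
      rw [Finset.sum_erase_eq_sub (Finset.mem_univ k), hdiag, sub_zero]
    calc ∑ j, lapMatrix a k j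
        = lapMatrix a k k + ∑ j ∈ Finset.univ.erase k, lapMatrix a k j :=
          (Finset.add_sum_erase _ _ (Finset.mem_univ k)).symm
      _ = (∑ m, a k m) + ∑ j ∈ Finset.univ.erase k, -(a k j) := by
          congr 1
          · simp [lapMatrix]
          · refine Finset.sum_congr rfl fun j hj => ?_
            have hkj : k ≠ j := fun h => (Finset.mem_erase.mp hj).1 h.symm
            simp [lapMatrix, hkj]
      _ = 0 := by rw [Finset.sum_neg_distrib, h1]; ring
  have hrowC : ∀ k, ∑ j, M k j = 0 := by
    intro k
    have : ∑ j, M k j = ((∑ j, lapMatrix a k j : ℝ) : ℂ) := by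
      rw [Complex.ofReal_sum]
      rfl
    rw [this, hrowR, Complex.ofReal_zero]
  constructor
  · -- multiplicity part
    rw [lapConnected] at hnconn
    push_neg at hnconn
    -- the ancestor sets
    set anc : Fin N → Finset (Fin N) :=
      fun k => Finset.univ.filter (fun j => Relation.ReflTransGen (lapEdge a) j k) with hanc
    have hmem : ∀ j k, j ∈ anc k ↔ Relation.ReflTransGen (lapEdge a) j k := by
      intro j k; simp [hanc]
    have hmono : ∀ j k, Relation.ReflTransGen (lapEdge a) j k → anc j ⊆ anc k := by
      intro j k h x hx
      exact (hmem x k).mpr (((hmem x j).mp hx).trans h)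
    obtain ⟨k0, -, hmin⟩ := Finset.exists_min_image Finset.univ
      (fun k => (anc k).card) ⟨Classical.arbitrary _, Finset.mem_univ _⟩
    have hk0 : ∀ j ∈ anc k0, anc j = anc k0 := fun j hj =>
      Finset.eq_of_subset_of_card_le (hmono j k0 ((hmem j k0).mp hj))
        (hmin j (Finset.mem_univ j))
    obtain ⟨kbad, hkbad⟩ := hnconn k0
    set S : Finset (Fin N) := anc k0 with hS
    set T : Finset (Fin N) := anc kbad with hT
    have hSne : S.Nonempty := ⟨k0, (hmem k0 k0).mpr Relation.ReflTransGen.refl⟩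
    have hTne : T.Nonempty := ⟨kbad, (hmem kbad kbad).mpr Relation.ReflTransGen.refl⟩
    have hdisj : ∀ x, x ∈ S → x ∈ T → False := by
      intro x hxS hxT
      have h1 : k0 ∈ anc x := by
        rw [hk0 x hxS]
        exact (hmem k0 k0).mpr Relation.ReflTransGen.refl
      exact hkbad (((hmem k0 x).mp h1).trans ((hmem x kbad).mp hxT))
    have hSclosed : ∀ k ∈ S, ∀ j, j ∉ S → a k j = 0 := by
      intro k hk j hj
      by_contra h
      have hlt : 0 < a k j := lt_of_le_of_ne (hnonneg k j) (Ne.symm h)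
      exact hj ((hmem j k0).mpr (Relation.ReflTransGen.head hlt ((hmem k k0).mp hk)))
    have hTclosed : ∀ k ∈ T, ∀ j, j ∉ T → a k j = 0 := by
      intro k hk j hj
      by_contra h
      have hlt : 0 < a k j := lt_of_le_of_ne (hnonneg k j) (Ne.symm h)
      exact hj ((hmem j kbad).mpr (Relation.ReflTransGen.head hlt ((hmem k kbad).mp hk)))
    -- matrix entry vanishing
    have hzeroS : ∀ i j : Fin N, i ∈ S → j ∉ S → M i j = 0 := by
      intro i j hi hj
      have hij : i ≠ j := fun h => hj (h ▸ hi)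
      simp [hM, lapMatrix, Matrix.map_apply, hij, hSclosed i hi j hj]
    have hzeroT : ∀ i j : Fin N, i ∈ T → j ∉ T → M i j = 0 := by
      intro i j hi hj
      have hij : i ≠ j := fun h => hj (h ▸ hi)
      simp [hM, lapMatrix, Matrix.map_apply, hij, hTclosed i hi j hj]
    -- first factorization
    have hfac1 := charpoly_factor_closed M (fun x => x ∈ S) hzeroS
    set A := M.submatrix (Subtype.val : {x // x ∈ S} → Fin N) Subtype.val with hA
    set D := M.submatrix (Subtype.val : {x // ¬ x ∈ S} → Fin N) Subtype.val with hD
    haveI : Nonempty {x // x ∈ S} := ⟨⟨hSne.choose, hSne.choose_spec⟩⟩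
    have hrowA : ∀ i : {x // x ∈ S}, ∑ j : {x // x ∈ S}, A i j = 0 := by
      intro i
      have h1 : ∑ j : {x // x ∈ S}, M ↑i ↑j = ∑ j ∈ S, M ↑i j :=
        Finset.sum_coe_sort S (fun j => M ↑i j)
      have h2 : ∑ j ∈ S, M ↑i j = ∑ j, M ↑i j :=
        Finset.sum_subset (Finset.subset_univ S)
          (fun x _ hx => hzeroS ↑i x i.2 hx)
      calc ∑ j : {x // x ∈ S}, A i j = ∑ j ∈ S, M ↑i j := h1
        _ = 0 := h2.trans (hrowC ↑i)
    -- second factorization inside D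
    have hzeroD : ∀ i j : {x // ¬ x ∈ S}, (↑i ∈ T) → ¬ (↑j ∈ T) → D i j = 0 :=
      fun i j hi hj => hzeroT ↑i ↑j hi hj
    have hfac2 := charpoly_factor_closed D (fun x => ↑x ∈ T) hzeroD
    set B := D.submatrix
      (Subtype.val : {x : {x // ¬ x ∈ S} // ↑x ∈ T} → {x // ¬ x ∈ S}) Subtype.val with hB
    haveI : Nonempty {x : {x // ¬ x ∈ S} // ↑x ∈ T} := by
      obtain ⟨t, ht⟩ := hTne
      exact ⟨⟨⟨t, fun hS' => hdisj t hS' ht⟩, ht⟩⟩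
    have hrowB : ∀ i : {x : {x // ¬ x ∈ S} // ↑x ∈ T},
        ∑ j : {x : {x // ¬ x ∈ S} // ↑x ∈ T}, B i j = 0 := by
      intro i
      let eT : {x : {x // ¬ x ∈ S} // ↑x ∈ T} ≃ {x // x ∈ T} :=
        { toFun := fun x => ⟨↑↑x, x.2⟩
          invFun := fun t => ⟨⟨↑t, fun hS' => hdisj ↑t hS' t.2⟩, t.2⟩
          left_inv := fun x => by ext; rfl
          right_inv := fun t => rfl }
      have h1 : ∑ j : {x : {x // ¬ x ∈ S} // ↑x ∈ T}, B i j
          = ∑ j : {x // x ∈ T}, M ↑↑i ↑j :=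
        Fintype.sum_equiv eT _ _ (fun j => rfl)
      have h2 : ∑ j : {x // x ∈ T}, M ↑↑i ↑j = ∑ j ∈ T, M ↑↑i j :=
        Finset.sum_coe_sort T (fun j => M ↑↑i j)
      have h3 : ∑ j ∈ T, M ↑↑i j = ∑ j, M ↑↑i j :=
        Finset.sum_subset (Finset.subset_univ T)
          (fun x _ hx => hzeroT ↑↑i x i.2 hx)
      rw [h1, h2, h3, hrowC]
    have hX2 : X ^ 2 ∣ M.charpoly := by
      rw [hfac1, hfac2, pow_two]
      exact mul_dvd_mul (X_dvd_charpoly_rowsum _ hrowA)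
        ((X_dvd_charpoly_rowsum _ hrowB).mul_right _)
    have hcp0 : M.charpoly ≠ 0 := (Matrix.charpoly_monic M).ne_zero
    constructor
    · rw [Polynomial.le_rootMultiplicity_iff hcp0]
      simpa using hX2
    · have hdvd := Polynomial.pow_rootMultiplicity_dvd M.charpoly 0
      have h4 := Polynomial.natDegree_le_of_dvd hdvd hcp0
      simpa [Matrix.charpoly_natDegree_eq_dim] using h4
  · -- Gershgorin part
    intro lam hroot hne
    have heig : Module.End.HasEigenvalue (Matrix.toLin' M) lam := by
      have hdet : (lam • (1 : Matrix (Fin N) (Fin N) ℂ) - M).det = 0 := by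
        have h1 : (((Polynomial.evalRingHom lam).mapMatrix) M.charmatrix).det = 0 := by
          rw [← RingHom.map_det]
          exact hroot
        have h2 : ((Polynomial.evalRingHom lam).mapMatrix) M.charmatrix
            = lam • (1 : Matrix (Fin N) (Fin N) ℂ) - M := by
          ext i j
          by_cases h : i = j <;>
            simp [h, RingHom.mapMatrix_apply, Matrix.charmatrix_apply_eq,
              Matrix.charmatrix_apply_ne, Matrix.one_apply]
        rwa [h2] at h1
      obtain ⟨v, hv0, hv⟩ := Matrix.exists_mulVec_eq_zero_iff.mpr hdet
      have hMv : M *ᵥ v = lam • v := by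
        rw [Matrix.sub_mulVec, Matrix.smul_mulVec, Matrix.one_mulVec, sub_eq_zero] at hv
        exact hv.symm
      exact Module.End.hasEigenvalue_of_hasEigenvector
        ⟨Module.End.mem_eigenspace_iff.mpr (by rw [Matrix.toLin'_apply]; exact hMv), hv0⟩
    obtain ⟨k, hk⟩ := eigenvalue_mem_ball heig
    set d : ℝ := ∑ m, a k m with hd
    have hd0 : 0 ≤ d := Finset.sum_nonneg fun m _ => hnonneg k m
    have hMkk : M k k = (d : ℂ) := by simp [hM, lapMatrix, Matrix.map_apply, hd]
    have hrad : ∑ j ∈ Finset.univ.erase k, ‖M k j‖ = d := by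
      have hc : ∀ j ∈ Finset.univ.erase k, ‖M k j‖ = a k j := by
        intro j hj
        have hkj : k ≠ j := fun h => (Finset.mem_erase.mp hj).1 h.symm
        simp [hM, lapMatrix, Matrix.map_apply, hkj, abs_of_nonneg (hnonneg k j)]
      rw [Finset.sum_congr rfl hc, Finset.sum_erase_eq_sub (Finset.mem_univ k), hdiag, sub_zero]
    have hdist : dist lam (d : ℂ) ≤ d := by
      have h := Metric.mem_closedBall.mp hk
      rwa [hMkk, hrad] at h
    have hsq : (lam.re - d) ^ 2 + lam.im ^ 2 ≤ d ^ 2 := by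
      have h1 := Complex.dist_eq_re_im lam (d : ℂ)
      have h2 : Real.sqrt ((lam.re - d) ^ 2 + lam.im ^ 2) ≤ d := by
        rw [h1] at hdist
        simpa using hdist
      nlinarith [Real.sq_sqrt (by positivity : (0:ℝ) ≤ (lam.re - d) ^ 2 + lam.im ^ 2),
        Real.sqrt_nonneg ((lam.re - d) ^ 2 + lam.im ^ 2)]
    by_contra hre
    push_neg at hre
    have h0 : lam.re ≠ 0 ∨ lam.im ≠ 0 := by
      by_contra hc
      push_neg at hc
      exact hne (Complex.ext hc.1 hc.2)
    rcases h0 with h | h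
    · have hlt : lam.re < 0 := lt_of_le_of_ne hre h
      nlinarith [mul_nonneg (neg_nonneg.mpr hlt.le) hd0, sq_nonneg lam.im,
        mul_pos (neg_pos.mpr hlt) (neg_pos.mpr hlt)]
    · nlinarith [mul_nonneg (neg_nonneg.mpr hre) hd0, sq_nonneg lam.re,
        pow_two_pos_of_ne_zero h]
end

section
/- Let N ≥ 1 and let a : Fin N → Fin N → ℝ be nonnegative weights with a k k = 0 for all k, and let L be the associated Laplacian matrix. Then (i) L · 1_N = 0, where 1_N is the all-ones vector, so 0 is an eigenvalue of L; and (ii) every eigenvalue λ ∈ ℂ of L satisfies Re λ ≥ 0, and moreover Re λ = 0 implies λ = 0. -/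
open Matrix Polynomial

lemma isRoot_charpoly_iff {n : Type*} [Fintype n] [DecidableEq n]
    (M : Matrix n n ℂ) (μ : ℂ) :
    M.charpoly.IsRoot μ ↔ ∃ v ≠ 0, M *ᵥ v = μ • v := by
  have h1 : M.charpoly.IsRoot μ ↔ (μ • (1 : Matrix n n ℂ) - M).det = 0 := by
    rw [Matrix.charpoly, Polynomial.IsRoot, ← Polynomial.coe_evalRingHom,
      RingHom.map_det]
    congr! 2
    ext i j
    simp only [RingHom.mapMatrix_apply, Matrix.map_apply]
    by_cases h : i = j
    · subst h; simp [charmatrix_apply_eq, Matrix.one_apply, Matrix.smul_apply]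
    · simp [charmatrix_apply_ne _ _ _ h, Matrix.one_apply_ne h, Matrix.smul_apply]
  rw [h1, ← Matrix.exists_mulVec_eq_zero_iff]
  constructor
  · rintro ⟨v, hv, h⟩
    refine ⟨v, hv, ?_⟩
    have := h
    rw [Matrix.sub_mulVec, sub_eq_zero, Matrix.smul_mulVec, Matrix.one_mulVec] at this
    exact this.symm
  · rintro ⟨v, hv, h⟩
    refine ⟨v, hv, ?_⟩
    rw [Matrix.sub_mulVec, sub_eq_zero, Matrix.smul_mulVec, Matrix.one_mulVec, h]

theorem stmt2 {N : ℕ} (hN : 1 ≤ N) (a : Fin N → Fin N → ℝ)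
    (hnonneg : ∀ k j, 0 ≤ a k j) (hdiag : ∀ k, a k k = 0) :
    (lapMatrix a *ᵥ (fun _ => (1 : ℝ)) = 0) ∧
    (((lapMatrix a).map Complex.ofReal).charpoly).IsRoot 0 ∧
    ∀ lam : ℂ, (((lapMatrix a).map Complex.ofReal).charpoly).IsRoot lam →
      0 ≤ lam.re ∧ (lam.re = 0 → lam = 0) := by
  haveI : NeZero N := ⟨by omega⟩
  have key : ∀ k : Fin N, ∑ j, lapMatrix a k j = 0 := by
    intro k
    rw [← Finset.sum_erase_add _ _ (Finset.mem_univ k)]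
    have h1 : lapMatrix a k k = ∑ m, a k m := by simp [lapMatrix]
    have h2 : ∑ j ∈ Finset.univ.erase k, lapMatrix a k j = -(∑ m, a k m) := by
      have heq : ∀ j ∈ Finset.univ.erase k, lapMatrix a k j = -(a k j) := by
        intro j hj
        have : k ≠ j := fun h => (Finset.mem_erase.mp hj).1 h.symm
        simp [lapMatrix, if_neg this]
      rw [Finset.sum_congr rfl heq, Finset.sum_neg_distrib,
        Finset.sum_erase_eq_sub (Finset.mem_univ k), hdiag, sub_zero]
    rw [h1, h2]
    ring
  constructor
  · funext k
    simpa [Matrix.mulVec, dotProduct] using key k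
  constructor
  · rw [isRoot_charpoly_iff]
    refine ⟨fun _ => 1, ?_, ?_⟩
    · intro h
      have := congrFun h ⟨0, by omega⟩
      simp at this
    · funext k
      have : ∑ j, ((lapMatrix a).map Complex.ofReal) k j = 0 := by
        simp only [Matrix.map_apply]
        rw [← Complex.ofReal_sum]
        rw [key k]
        simp
      simpa [Matrix.mulVec, dotProduct] using this
  · intro lam hroot
    rw [isRoot_charpoly_iff] at hroot
    obtain ⟨v, hv, hMv⟩ := hroot
    have heig : Module.End.HasEigenvalue (Matrix.toLin' ((lapMatrix a).map Complex.ofReal)) lam := by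
      apply Module.End.hasEigenvalue_of_hasEigenvector (x := v)
      refine ⟨Module.End.mem_eigenspace_iff.mpr ?_, hv⟩
      simpa [Matrix.toLin'_apply] using hMv
    obtain ⟨k, hk⟩ := eigenvalue_mem_ball heig
    rw [Metric.mem_closedBall, dist_eq_norm] at hk
    -- compute center and radius
    have hcenter : ((lapMatrix a).map Complex.ofReal) k k = ((∑ m, a k m : ℝ) : ℂ) := by
      simp [lapMatrix, Matrix.map_apply]
    have hradius : ∑ j ∈ Finset.univ.erase k, ‖((lapMatrix a).map Complex.ofReal) k j‖
        = ∑ m, a k m := by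
      have : ∀ j ∈ Finset.univ.erase k, ‖((lapMatrix a).map Complex.ofReal) k j‖ = a k j := by
        intro j hj
        have hjk : k ≠ j := fun h => (Finset.mem_erase.mp hj).1 h.symm
        simp [lapMatrix, Matrix.map_apply, if_neg hjk, abs_of_nonneg (hnonneg k j)]
      rw [Finset.sum_congr rfl this]
      rw [Finset.sum_erase_eq_sub (Finset.mem_univ k), hdiag, sub_zero]
    set c : ℝ := ∑ m, a k m with hc
    have hc0 : 0 ≤ c := Finset.sum_nonneg fun m _ => hnonneg k m
    rw [hcenter, hradius] at hk
    -- ‖lam - c‖ ≤ c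
    have hsq : (lam.re - c)^2 + lam.im^2 ≤ c^2 := by
      have habs : ‖lam - (c : ℂ)‖ ≤ c := hk
      have hns : Complex.normSq (lam - (c : ℂ)) ≤ c^2 := by
        have hsqabs := Complex.sq_norm (lam - (c : ℂ))
        nlinarith [norm_nonneg (lam - (c : ℂ))]
      simpa [Complex.normSq_apply, Complex.sub_re, Complex.sub_im, Complex.ofReal_re,
        Complex.ofReal_im, pow_two] using hns
    have hre : 0 ≤ lam.re := by nlinarith [sq_nonneg lam.im, sq_nonneg (lam.re - c)]
    refine ⟨hre, fun h0 => ?_⟩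
    have him : lam.im = 0 := by nlinarith [sq_nonneg lam.im]
    exact Complex.ext h0 him
end

section
/- Let N ≥ 2, let L be an N×N real matrix satisfying L · 1_N = 0 (every row of L sums to zero), partitioned as L = fromBlocks L₁₁ L₁₂ L₂₁ L₂₂ with L₁₁ of size 1×1, and let J be an invertible (N−1)×(N−1) real matrix. Let T = fromBlocks 1 0 1_{N−1} J. Then T⁻¹ L T = fromBlocks 0 (L₁₂ J) 0 (J⁻¹ (L₂₂ − 1_{N−1} L₁₂) J); in particular the first column of T⁻¹ L T is zero and its (1,1) entry is 0. -/
open Matrix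

/-- The all-ones column vector in `ℝ^m`, viewed as an `m × 1` matrix. -/
def onesCol (m : ℕ) : Matrix (Fin m) (Fin 1) ℝ := Matrix.of fun _ _ => 1

theorem stmt5 {N : ℕ} (hN : 2 ≤ N)
    (L11 : Matrix (Fin 1) (Fin 1) ℝ) (L12 : Matrix (Fin 1) (Fin (N - 1)) ℝ)
    (L21 : Matrix (Fin (N - 1)) (Fin 1) ℝ) (L22 : Matrix (Fin (N - 1)) (Fin (N - 1)) ℝ)
    (hrow : Matrix.fromBlocks L11 L12 L21 L22 *ᵥ (fun _ => (1 : ℝ)) = 0)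
    (J : Matrix (Fin (N - 1)) (Fin (N - 1)) ℝ) (hJ : IsUnit J) :
    (Matrix.fromBlocks (1 : Matrix (Fin 1) (Fin 1) ℝ) 0 (onesCol (N - 1)) J)⁻¹ *
        Matrix.fromBlocks L11 L12 L21 L22 *
        Matrix.fromBlocks (1 : Matrix (Fin 1) (Fin 1) ℝ) 0 (onesCol (N - 1)) J =
      Matrix.fromBlocks 0 (L12 * J) 0 (J⁻¹ * (L22 - onesCol (N - 1) * L12) * J) := by
  have hJJ : J⁻¹ * J = 1 := nonsing_inv_mul J ((isUnit_iff_isUnit_det J).mp hJ)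
  have h1 : L11 + L12 * onesCol (N - 1) = 0 := by
    ext i j
    have := congrFun hrow (Sum.inl i)
    simp [Matrix.mulVec, dotProduct, Matrix.mul_apply, onesCol,
      Fin.eq_zero j] at this ⊢
    simpa using this
  have h2 : L21 + L22 * onesCol (N - 1) = 0 := by
    ext i j
    have := congrFun hrow (Sum.inr i)
    simp [Matrix.mulVec, dotProduct, Matrix.mul_apply, onesCol,
      Fin.eq_zero j] at this ⊢
    simpa using this
  have hTinv : (Matrix.fromBlocks (1 : Matrix (Fin 1) (Fin 1) ℝ) 0 (onesCol (N - 1)) J)⁻¹ =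
      Matrix.fromBlocks 1 0 (-(J⁻¹ * onesCol (N - 1))) J⁻¹ := by
    apply Matrix.inv_eq_left_inv
    rw [Matrix.fromBlocks_multiply]
    simp [hJJ]
  rw [hTinv, Matrix.mul_assoc, Matrix.fromBlocks_multiply, Matrix.fromBlocks_multiply]
  have e1 : L11 * (1 : Matrix (Fin 1) (Fin 1) ℝ) + L12 * onesCol (N - 1) = 0 := by
    rwa [Matrix.mul_one]
  have e2 : L21 * (1 : Matrix (Fin 1) (Fin 1) ℝ) + L22 * onesCol (N - 1) = 0 := by
    rwa [Matrix.mul_one]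
  rw [e1, e2]
  congr 1 <;>
    simp [Matrix.mul_sub, Matrix.sub_mul, Matrix.mul_assoc] <;> abel
end

section
/- Let N ≥ 2 and let L be an N×N real matrix satisfying L · 1_N = 0 (every row of L sums to zero), partitioned as L = fromBlocks L₁₁ L₁₂ L₂₁ L₂₂ with L₁₁ of size 1×1. Then the characteristic polynomial of L equals X times the characteristic polynomial of the (N−1)×(N−1) matrix L₂₂ − 1_{N−1} L₁₂. Consequently, over ℂ, the multiset of eigenvalues of L is {0} together with the multiset of eigenvalues of L₂₂ − 1_{N−1} L₁₂. -/
open Matrix Polynomial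

lemma charpoly_conj_aux {n R : Type*} [CommRing R] [Fintype n] [DecidableEq n]
    (S T M : Matrix n n R) (hST : S * T = 1) :
    (S * M * T).charpoly = M.charpoly := by
  have hmap : ∀ A B : Matrix n n R, (A * B).map (C : R →+* R[X]) = A.map C * B.map C := by
    intro A B; exact Matrix.map_mul
  have hone : (1 : Matrix n n R).map (C : R →+* R[X]) = 1 :=
    Matrix.map_one _ (map_zero _) (map_one _)
  have hdet : (S.map (C : R →+* R[X])).det * (T.map C).det = 1 := by
    rw [← det_mul, ← hmap, hST, hone, det_one]
  have key : charmatrix (S * M * T) = S.map C * charmatrix M * T.map C := by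
    rw [charmatrix, charmatrix]
    have hc : S.map (C : R →+* R[X]) * Matrix.scalar n (X : R[X]) =
        Matrix.scalar n (X : R[X]) * S.map C :=
      ((Matrix.scalar_commute (X : R[X]) (fun r' => Commute.all _ _) (S.map C))).symm
    have : (S * M * T).map (C : R →+* R[X]) = S.map C * M.map C * T.map C := by
      rw [hmap, hmap]
    rw [RingHom.mapMatrix_apply, RingHom.mapMatrix_apply, this, mul_sub, sub_mul, hc,
      mul_assoc, mul_assoc, ← hmap S T, hST, hone, mul_one]
  rw [Matrix.charpoly, Matrix.charpoly, key, det_mul, det_mul]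
  calc (S.map (C : R →+* R[X])).det * (charmatrix M).det * (T.map C).det
      = (S.map (C : R →+* R[X])).det * (T.map C).det * (charmatrix M).det := by ring
    _ = (charmatrix M).det := by rw [hdet, one_mul]

theorem stmt6 {N : ℕ} (hN : 2 ≤ N)
    (L11 : Matrix (Fin 1) (Fin 1) ℝ) (L12 : Matrix (Fin 1) (Fin (N - 1)) ℝ)
    (L21 : Matrix (Fin (N - 1)) (Fin 1) ℝ) (L22 : Matrix (Fin (N - 1)) (Fin (N - 1)) ℝ)
    (hrow : Matrix.fromBlocks L11 L12 L21 L22 *ᵥ (fun _ => (1 : ℝ)) = 0) :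
    (Matrix.fromBlocks L11 L12 L21 L22).charpoly =
      Polynomial.X * (L22 - onesCol (N - 1) * L12).charpoly ∧
    (((Matrix.fromBlocks L11 L12 L21 L22).map Complex.ofReal).charpoly).roots =
      0 ::ₘ (((L22 - onesCol (N - 1) * L12).map Complex.ofReal).charpoly).roots := by
  set c := onesCol (N - 1) with hc
  -- extract the block row-sum conditions
  have hrow' : Matrix.fromBlocks L11 L12 L21 L22 *ᵥ
      Sum.elim (fun _ => (1 : ℝ)) (fun _ => (1 : ℝ)) = 0 := by
    convert hrow using 2
    ext (i | i) <;> rfl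
  rw [Matrix.fromBlocks_mulVec] at hrow'
  have h1 : L11 *ᵥ (fun _ => (1 : ℝ)) + L12 *ᵥ (fun _ => (1 : ℝ)) = 0 := by
    funext i; simpa [Function.comp_def] using congrFun hrow' (Sum.inl i)
  have h2 : L21 *ᵥ (fun _ => (1 : ℝ)) + L22 *ᵥ (fun _ => (1 : ℝ)) = 0 := by
    funext i; simpa [Function.comp_def] using congrFun hrow' (Sum.inr i)
  -- matrix versions
  have hb1 : L11 + L12 * c = 0 := by
    ext i j
    have := congrFun h1 i
    simpa [Matrix.mulVec, Matrix.mul_apply, hc, onesCol, dotProduct,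
      Fin.eq_zero j] using this
  have hb2 : L21 + L22 * c = 0 := by
    ext i j
    have := congrFun h2 i
    simpa [Matrix.mulVec, Matrix.mul_apply, hc, onesCol, dotProduct,
      Fin.eq_zero j] using this
  set S : Matrix (Fin 1 ⊕ Fin (N-1)) (Fin 1 ⊕ Fin (N-1)) ℝ := Matrix.fromBlocks 1 0 c 1 with hS
  set T : Matrix (Fin 1 ⊕ Fin (N-1)) (Fin 1 ⊕ Fin (N-1)) ℝ :=
    Matrix.fromBlocks 1 0 (-c) 1 with hT
  have hST : S * T = 1 := by
    rw [hS, hT, Matrix.fromBlocks_multiply]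
    simp [← Matrix.fromBlocks_one]
  set M : Matrix (Fin 1 ⊕ Fin (N-1)) (Fin 1 ⊕ Fin (N-1)) ℝ :=
    Matrix.fromBlocks 0 L12 0 (L22 - c * L12) with hM
  have e1 : L11 = -(L12 * c) := eq_neg_of_add_eq_zero_left hb1
  have e2 : L21 = -(L22 * c) := eq_neg_of_add_eq_zero_left hb2
  have hSM : S * M = Matrix.fromBlocks 0 L12 0 L22 := by
    rw [hS, hM, Matrix.fromBlocks_multiply]
    congr 1 <;> simp
  have hSMT : Matrix.fromBlocks 0 L12 0 L22 * T =
      Matrix.fromBlocks (-(L12 * c)) L12 (-(L22 * c)) L22 := by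
    rw [hT, Matrix.fromBlocks_multiply]
    congr 1 <;> simp [Matrix.mul_neg]
  have hL : Matrix.fromBlocks L11 L12 L21 L22 = S * M * T := by
    rw [hSM, hSMT, e1, e2]
  have hz : (0 : Matrix (Fin 1) (Fin 1) ℝ).charpoly = X := by
    rw [Matrix.charpoly, Matrix.det_fin_one, charmatrix_apply_eq]
    simp
  have part1 : (Matrix.fromBlocks L11 L12 L21 L22).charpoly =
      Polynomial.X * (L22 - c * L12).charpoly := by
    rw [hL, charpoly_conj_aux S T M hST, hM, Matrix.charpoly_fromBlocks_zero₂₁, hz]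
  refine ⟨part1, ?_⟩
  have hcoe : (Complex.ofReal : ℝ → ℂ) = ⇑Complex.ofRealHom := rfl
  have hmapeq : ((Matrix.fromBlocks L11 L12 L21 L22).map Complex.ofReal).charpoly =
      X * (((L22 - c * L12).map Complex.ofReal).charpoly) := by
    rw [hcoe, Matrix.charpoly_map, Matrix.charpoly_map, part1, Polynomial.map_mul,
      Polynomial.map_X]
  rw [hmapeq, Polynomial.roots_mul (mul_ne_zero Polynomial.X_ne_zero
    ((L22 - c * L12).map Complex.ofReal).charpoly_monic.ne_zero), Polynomial.roots_X]
  rfl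
end

section
/- Let d ≥ 1, let S be a d×d real matrix, C a 1×d real matrix, and let a > 0, μ > 0. Suppose P is a symmetric positive definite d×d real matrix satisfying the algebraic Riccati equation S P + P Sᵀ − 2μ P Cᵀ C P + a I = 0. Then for every λ ∈ ℂ with Re λ ≥ μ, writing F = S − λ P Cᵀ C (real matrices coerced into ℂ), one has for all ζ ∈ ℂ^d: 2 Re(ζᴴ P⁻¹ F ζ) ≤ −a ζᴴ P⁻² ζ; equivalently, the Hermitian matrix Fᴴ P⁻¹ + P⁻¹ F + a P⁻² is negative semidefinite. -/
open Matrix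
open scoped ComplexOrder

lemma aux_map_mul {m n k : ℕ} (A : Matrix (Fin m) (Fin n) ℝ) (B : Matrix (Fin n) (Fin k) ℝ) :
    (A * B).map Complex.ofReal = A.map Complex.ofReal * B.map Complex.ofReal :=
  Matrix.map_mul (f := Complex.ofRealHom)

lemma aux_map_add {m n : ℕ} (A B : Matrix (Fin m) (Fin n) ℝ) :
    (A + B).map Complex.ofReal = A.map Complex.ofReal + B.map Complex.ofReal := by
  ext i j; simp [Matrix.map_apply]

lemma aux_map_sub {m n : ℕ} (A B : Matrix (Fin m) (Fin n) ℝ) :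
    (A - B).map Complex.ofReal = A.map Complex.ofReal - B.map Complex.ofReal := by
  ext i j; simp [Matrix.map_apply]

lemma aux_map_smul {m n : ℕ} (r : ℝ) (A : Matrix (Fin m) (Fin n) ℝ) :
    (r • A).map Complex.ofReal = (r : ℂ) • A.map Complex.ofReal := by
  ext i j; simp [Matrix.map_apply]

lemma aux_map_ct {m n : ℕ} (A : Matrix (Fin m) (Fin n) ℝ) :
    (A.map Complex.ofReal)ᴴ = Aᵀ.map Complex.ofReal := by
  ext i j; simp [Matrix.conjTranspose_apply, Matrix.map_apply]

lemma aux_star_quad {d : ℕ} (N : Matrix (Fin d) (Fin d) ℂ) (ζ : Fin d → ℂ) :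
    star ζ ⬝ᵥ Nᴴ *ᵥ ζ = star (star ζ ⬝ᵥ N *ᵥ ζ) := by
  rw [star_dotProduct]
  congr 1
  rw [star_mulVec, conjTranspose_conjTranspose, ← Matrix.dotProduct_mulVec]

theorem stmt7 {d : ℕ} (hd : 1 ≤ d)
    (S : Matrix (Fin d) (Fin d) ℝ) (C : Matrix (Fin 1) (Fin d) ℝ)
    (a μ : ℝ) (ha : 0 < a) (hμ : 0 < μ)
    (P : Matrix (Fin d) (Fin d) ℝ) (hPsymm : P.IsSymm) (hPpos : P.PosDef)
    (hric : S * P + P * Sᵀ - (2 * μ) • (P * Cᵀ * C * P) +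
      a • (1 : Matrix (Fin d) (Fin d) ℝ) = 0)
    (lam : ℂ) (hlam : μ ≤ lam.re) :
    (∀ ζ : Fin d → ℂ,
      2 * (star ζ ⬝ᵥ ((P⁻¹.map Complex.ofReal) *ᵥ
          ((S.map Complex.ofReal - lam • ((P * Cᵀ * C).map Complex.ofReal)) *ᵥ ζ))).re ≤
        -a * (star ζ ⬝ᵥ (((P⁻¹ * P⁻¹).map Complex.ofReal) *ᵥ ζ)).re) ∧
    (-((S.map Complex.ofReal - lam • ((P * Cᵀ * C).map Complex.ofReal))ᴴ *
          (P⁻¹.map Complex.ofReal) +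
        (P⁻¹.map Complex.ofReal) *
          (S.map Complex.ofReal - lam • ((P * Cᵀ * C).map Complex.ofReal)) +
        (a : ℂ) • ((P⁻¹ * P⁻¹).map Complex.ofReal))).PosSemidef := by
  have hdet : IsUnit P.det := isUnit_iff_ne_zero.mpr hPpos.det_pos.ne'
  have hP1 : P⁻¹ * P = 1 := Matrix.nonsing_inv_mul P hdet
  have hP2 : P * P⁻¹ = 1 := Matrix.mul_nonsing_inv P hdet
  -- real key identity
  have hkey : P⁻¹ * S + Sᵀ * P⁻¹ = (2*μ) • (Cᵀ*C) - a • (P⁻¹*P⁻¹) := by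
    have h1 : S * P + P * Sᵀ = (2 * μ) • (P * Cᵀ * C * P) - a • 1 := by
      have := hric
      rw [sub_add_eq_add_sub, sub_eq_zero] at this
      rw [eq_sub_iff_add_eq]; exact this
    have h := congrArg (fun X => P⁻¹ * X * P⁻¹) h1
    simp only [Matrix.mul_add, Matrix.add_mul, Matrix.mul_sub, Matrix.sub_mul,
      Matrix.mul_smul, Matrix.smul_mul, Matrix.mul_one, Matrix.one_mul] at h
    rw [← Matrix.mul_assoc P⁻¹ S P, Matrix.mul_nonsing_inv_cancel_right _ _ hdet,
      Matrix.nonsing_inv_mul_cancel_left _ _ hdet,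
      ← Matrix.mul_assoc P⁻¹ (P * Cᵀ * C) P, Matrix.mul_nonsing_inv_cancel_right _ _ hdet,
      Matrix.mul_assoc P Cᵀ C, Matrix.nonsing_inv_mul_cancel_left _ _ hdet] at h
    exact h
  -- complex abbreviations
  set Sc := S.map Complex.ofReal with hSc
  set Kc := (P * Cᵀ * C).map Complex.ofReal with hKc
  set Qc := P⁻¹.map Complex.ofReal with hQc
  set G := (Cᵀ * C).map Complex.ofReal with hG
  set F := Sc - lam • Kc with hF
  -- real cancellation lemmas
  have hr1 : (P * Cᵀ * C)ᵀ * P⁻¹ = Cᵀ * C := by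
    simp [Matrix.transpose_mul, Matrix.transpose_transpose, hPsymm.eq, Matrix.mul_assoc, hP2]
  have hr2 : P⁻¹ * (P * Cᵀ * C) = Cᵀ * C := by
    rw [Matrix.mul_assoc P Cᵀ C, Matrix.nonsing_inv_mul_cancel_left _ _ hdet]
  have e1 : Fᴴ * Qc = (Sᵀ * P⁻¹).map Complex.ofReal - (starRingEnd ℂ) lam • G := by
    rw [hF, conjTranspose_sub, conjTranspose_smul, hSc, hKc, aux_map_ct, aux_map_ct,
      Matrix.sub_mul, Matrix.smul_mul, hQc, ← aux_map_mul, ← aux_map_mul, hr1, hG, starRingEnd_apply]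
  have e2 : Qc * F = (P⁻¹ * S).map Complex.ofReal - lam • G := by
    rw [hF, Matrix.mul_sub, Matrix.mul_smul, hQc, hSc, hKc, ← aux_map_mul, ← aux_map_mul,
      hr2, hG]
  have hconj : (starRingEnd ℂ) lam = 2 * (lam.re : ℂ) - lam := by
    have := Complex.add_conj lam
    push_cast at this
    linear_combination this
  have hkey' : (Sᵀ * P⁻¹).map Complex.ofReal + (P⁻¹ * S).map Complex.ofReal =
      ((2*μ : ℝ) : ℂ) • G - (a : ℂ) • ((P⁻¹ * P⁻¹).map Complex.ofReal) := by
    rw [← aux_map_add, add_comm (Sᵀ * P⁻¹), hkey, aux_map_sub, aux_map_smul, aux_map_smul, hG]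
  have hmain : -(Fᴴ * Qc + Qc * F + (a : ℂ) • ((P⁻¹ * P⁻¹).map Complex.ofReal)) =
      ((2 * lam.re - 2 * μ : ℝ) : ℂ) • G := by
    rw [e1, e2, hconj]
    have hX := hkey'
    set X := (Sᵀ * P⁻¹).map Complex.ofReal
    set Y := (P⁻¹ * S).map Complex.ofReal
    set Z := (P⁻¹ * P⁻¹).map Complex.ofReal
    have hXe : X = (((2*μ : ℝ)) : ℂ) • G - (a : ℂ) • Z - Y := by
      rw [← hX]; abel
    rw [hXe]
    push_cast
    module
  have hG2 : G = (C.map Complex.ofReal)ᴴ * (C.map Complex.ofReal) := by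
    rw [hG, aux_map_mul, aux_map_ct]
  have hcnn : (0:ℝ) ≤ 2 * lam.re - 2 * μ := by linarith
  have hpsd : (-(Fᴴ * Qc + Qc * F +
      (a : ℂ) • ((P⁻¹ * P⁻¹).map Complex.ofReal))).PosSemidef := by
    rw [hmain, hG2]
    have : ((2 * lam.re - 2 * μ : ℝ) : ℂ) • ((C.map Complex.ofReal)ᴴ * (C.map Complex.ofReal)) =
        ((Real.sqrt (2 * lam.re - 2 * μ) : ℂ) • C.map Complex.ofReal)ᴴ *
        ((Real.sqrt (2 * lam.re - 2 * μ) : ℂ) • C.map Complex.ofReal) := by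
      rw [conjTranspose_smul, Matrix.smul_mul, Matrix.mul_smul, smul_smul]
      congr 1
      rw [Complex.star_def, Complex.conj_ofReal, ← Complex.ofReal_mul,
        Real.mul_self_sqrt hcnn]
    rw [this]
    exact posSemidef_conjTranspose_mul_self _
  refine ⟨?_, hpsd⟩
  intro ζ
  have h0 := hpsd.dotProduct_mulVec_nonneg ζ
  rw [Complex.le_def] at h0
  have h0re := h0.1
  have hQH : Qcᴴ = Qc := by
    rw [hQc, aux_map_ct, Matrix.transpose_nonsing_inv, hPsymm.eq]
  have hq1 : star ζ ⬝ᵥ (Fᴴ * Qc) *ᵥ ζ = star (star ζ ⬝ᵥ (Qc * F) *ᵥ ζ) := by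
    have : (Qc * F)ᴴ = Fᴴ * Qc := by rw [conjTranspose_mul, hQH]
    rw [← this, aux_star_quad]
  rw [Matrix.mulVec_mulVec]
  simp only [Matrix.neg_mulVec, Matrix.add_mulVec, Matrix.smul_mulVec,
    dotProduct_neg, dotProduct_add, dotProduct_smul, Complex.zero_re, Complex.neg_re,
    Complex.add_re, smul_eq_mul, Complex.re_ofReal_mul, hq1, Complex.star_def, Complex.conj_re] at h0re ⊢
  linarith
end

section
/- Let n ≥ 1, let Q be a symmetric n×n real matrix, H an n×n real matrix, and suppose there is a' > 0 with 2 ζᵀ Q H ζ ≤ −a' ‖ζ‖² for all ζ ∈ ℝⁿ. Let c ≥ 0 and let λ̄ > 0 satisfy ζᵀ Q ζ ≤ λ̄ ‖ζ‖² for all ζ. Then for every g ≥ 0, every ζ ∈ ℝⁿ, and every Δ ∈ ℝⁿ with ‖Δ‖ ≤ c ‖ζ‖, one has 2 ζᵀ Q (g H ζ + Δ) ≤ −(g a' − 2 c ‖Q‖) ‖ζ‖², where ‖Q‖ is the operator norm of Q. In particular, for any a_c > 0, if g ≥ (2 c ‖Q‖ + a_c λ̄)/a', then 2 ζᵀ Q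 (g H ζ + Δ) ≤ −a_c ζᵀ Q ζ. -/
open Matrix

/-- The operator norm of a real square matrix, induced by the Euclidean norm. -/
noncomputable def matOpNorm {n : ℕ} (M : Matrix (Fin n) (Fin n) ℝ) : ℝ :=
  ‖LinearMap.toContinuousLinearMap (Matrix.toEuclideanLin M)‖

lemma euc_norm_eq {n : ℕ} (x : Fin n → ℝ) :
    ‖(WithLp.equiv 2 (Fin n → ℝ)).symm x‖ = Real.sqrt (∑ i, x i ^ 2) := by
  rw [EuclideanSpace.norm_eq]
  congr 1
  apply Finset.sum_congr rfl
  intro i _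
  simp [Real.norm_eq_abs, sq_abs]

lemma dot_bound {n : ℕ} (Q : Matrix (Fin n) (Fin n) ℝ) (x y : Fin n → ℝ) :
    x ⬝ᵥ (Q *ᵥ y) ≤ matOpNorm Q * Real.sqrt (∑ i, x i ^ 2) * Real.sqrt (∑ i, y i ^ 2) := by
  set T := LinearMap.toContinuousLinearMap (Matrix.toEuclideanLin Q)
  set x' : EuclideanSpace ℝ (Fin n) := (WithLp.equiv 2 (Fin n → ℝ)).symm x
  set y' : EuclideanSpace ℝ (Fin n) := (WithLp.equiv 2 (Fin n → ℝ)).symm y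
  have h1 : x ⬝ᵥ (Q *ᵥ y) = inner ℝ x' (T y') := by
    simp only [T, LinearMap.coe_toContinuousLinearMap', x', y',
      Matrix.toEuclideanLin_apply]
    rw [EuclideanSpace.inner_eq_star_dotProduct]
    simp [dotProduct, mul_comm, dotProduct_comm]
  rw [h1]
  calc inner ℝ x' (T y') ≤ ‖x'‖ * ‖T y'‖ := real_inner_le_norm x' (T y')
    _ ≤ ‖x'‖ * (‖T‖ * ‖y'‖) := by
        gcongr
        exact T.le_opNorm y'
    _ = matOpNorm Q * Real.sqrt (∑ i, x i ^ 2) * Real.sqrt (∑ i, y i ^ 2) := by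
        simp only [matOpNorm]; rw [euc_norm_eq, euc_norm_eq]; ring

theorem stmt10 {n : ℕ} (hn : 1 ≤ n)
    (Q H : Matrix (Fin n) (Fin n) ℝ) (hQ : Q.IsSymm)
    (a' : ℝ) (ha' : 0 < a')
    (hH : ∀ ζ : Fin n → ℝ, 2 * (ζ ⬝ᵥ (Q *ᵥ (H *ᵥ ζ))) ≤ -a' * ∑ i, ζ i ^ 2)
    (c : ℝ) (hc : 0 ≤ c) (lamU : ℝ) (hlamU : 0 < lamU)
    (hupper : ∀ ζ : Fin n → ℝ, ζ ⬝ᵥ (Q *ᵥ ζ) ≤ lamU * ∑ i, ζ i ^ 2) :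
    (∀ g : ℝ, 0 ≤ g → ∀ ζ Δ : Fin n → ℝ,
        Real.sqrt (∑ i, Δ i ^ 2) ≤ c * Real.sqrt (∑ i, ζ i ^ 2) →
        2 * (ζ ⬝ᵥ (Q *ᵥ (g • (H *ᵥ ζ) + Δ))) ≤
          -(g * a' - 2 * c * matOpNorm Q) * ∑ i, ζ i ^ 2) ∧
    (∀ ac : ℝ, 0 < ac → ∀ g : ℝ, (2 * c * matOpNorm Q + ac * lamU) / a' ≤ g →
        ∀ ζ Δ : Fin n → ℝ,
        Real.sqrt (∑ i, Δ i ^ 2) ≤ c * Real.sqrt (∑ i, ζ i ^ 2) →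
        2 * (ζ ⬝ᵥ (Q *ᵥ (g • (H *ᵥ ζ) + Δ))) ≤ -ac * (ζ ⬝ᵥ (Q *ᵥ ζ))) := by
  have hQnorm : 0 ≤ matOpNorm Q := norm_nonneg _
  have key : ∀ g : ℝ, 0 ≤ g → ∀ ζ Δ : Fin n → ℝ,
      Real.sqrt (∑ i, Δ i ^ 2) ≤ c * Real.sqrt (∑ i, ζ i ^ 2) →
      2 * (ζ ⬝ᵥ (Q *ᵥ (g • (H *ᵥ ζ) + Δ))) ≤
        -(g * a' - 2 * c * matOpNorm Q) * ∑ i, ζ i ^ 2 := by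
    intro g hg ζ Δ hΔ
    have hsplit : ζ ⬝ᵥ (Q *ᵥ (g • (H *ᵥ ζ) + Δ)) =
        g * (ζ ⬝ᵥ (Q *ᵥ (H *ᵥ ζ))) + ζ ⬝ᵥ (Q *ᵥ Δ) := by
      rw [Matrix.mulVec_add, Matrix.mulVec_smul, dotProduct_add,
        dotProduct_smul]
      simp [smul_eq_mul]
    have hs2 : ∑ i, ζ i ^ 2 = Real.sqrt (∑ i, ζ i ^ 2) * Real.sqrt (∑ i, ζ i ^ 2) := by
      rw [Real.mul_self_sqrt]
      positivity
    have h2 : ζ ⬝ᵥ (Q *ᵥ Δ) ≤ c * matOpNorm Q * ∑ i, ζ i ^ 2 := by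
      calc ζ ⬝ᵥ (Q *ᵥ Δ)
          ≤ matOpNorm Q * Real.sqrt (∑ i, ζ i ^ 2) * Real.sqrt (∑ i, Δ i ^ 2) :=
            dot_bound Q ζ Δ
        _ ≤ matOpNorm Q * Real.sqrt (∑ i, ζ i ^ 2) * (c * Real.sqrt (∑ i, ζ i ^ 2)) := by
            have : 0 ≤ matOpNorm Q * Real.sqrt (∑ i, ζ i ^ 2) := by positivity
            exact mul_le_mul_of_nonneg_left hΔ this
        _ = c * matOpNorm Q * ∑ i, ζ i ^ 2 := by
            conv_rhs => rw [hs2]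
            ring
    have h1 : g * (2 * (ζ ⬝ᵥ (Q *ᵥ (H *ᵥ ζ)))) ≤ g * (-a' * ∑ i, ζ i ^ 2) :=
      mul_le_mul_of_nonneg_left (hH ζ) hg
    rw [hsplit]
    nlinarith [h1, h2]
  refine ⟨key, ?_⟩
  intro ac hac g hg ζ Δ hΔ
  have hg0 : 0 ≤ g := le_trans (by positivity) hg
  have hga : 2 * c * matOpNorm Q + ac * lamU ≤ g * a' := by
    rw [div_le_iff₀ ha'] at hg; linarith
  have hs : 0 ≤ ∑ i, ζ i ^ 2 := by positivity
  calc 2 * (ζ ⬝ᵥ (Q *ᵥ (g • (H *ᵥ ζ) + Δ)))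
      ≤ -(g * a' - 2 * c * matOpNorm Q) * ∑ i, ζ i ^ 2 := key g hg0 ζ Δ hΔ
    _ ≤ -(ac * lamU) * ∑ i, ζ i ^ 2 := by
        apply mul_le_mul_of_nonneg_right _ hs
        linarith
    _ ≤ -ac * (ζ ⬝ᵥ (Q *ᵥ ζ)) := by
        have := hupper ζ
        nlinarith
end

section
/- Let (ΔT_n)_{n∈ℕ} be a sequence of nonnegative reals, let τ > 0 and n₀ ∈ ℕ be such that ∑_{k=0}^{n−1} ΔT_k ≥ τ (n − n₀) for every n ∈ ℕ (where the right-hand side is the real number τ·(n − n₀), possibly negative). Let a_c > 0 and c_j ≥ 0 with a_c τ > c_j, and let (V_n)_{n∈ℕ} be a sequence of nonnegative reals satisfying V_{n+1} ≤ e^{c_j} · e^{−a_c ΔT_n} · V_n for every n. Then for every n ∈ ℕ: V_n ≤ e^{a_c τ n₀} · e^{−(a_c τ − c_j) n} · V_0; in particular V_n → 0 as n → ∞. -/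
open Filter

theorem stmt14 (ΔT : ℕ → ℝ) (hΔT : ∀ n, 0 ≤ ΔT n)
    (τ : ℝ) (hτ : 0 < τ) (n₀ : ℕ)
    (hADT : ∀ n : ℕ, τ * ((n : ℝ) - (n₀ : ℝ)) ≤ ∑ k ∈ Finset.range n, ΔT k)
    (ac cj : ℝ) (hac : 0 < ac) (hcj : 0 ≤ cj) (hslow : cj < ac * τ)
    (V : ℕ → ℝ) (hV : ∀ n, 0 ≤ V n)
    (hrec : ∀ n, V (n + 1) ≤ Real.exp cj * (Real.exp (-(ac * ΔT n)) * V n)) :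
    (∀ n : ℕ, V n ≤ Real.exp (ac * τ * (n₀ : ℝ)) *
        (Real.exp (-(ac * τ - cj) * (n : ℝ)) * V 0)) ∧
    Tendsto V atTop (nhds 0) := by
  have key : ∀ n : ℕ, V n ≤ Real.exp (cj * n - ac * ∑ k ∈ Finset.range n, ΔT k) * V 0 := by
    intro n
    induction n with
    | zero => simp
    | succ n ih =>
      calc V (n + 1) ≤ Real.exp cj * (Real.exp (-(ac * ΔT n)) * V n) := hrec n
        _ ≤ Real.exp cj * (Real.exp (-(ac * ΔT n)) *
              (Real.exp (cj * n - ac * ∑ k ∈ Finset.range n, ΔT k) * V 0)) := by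
            gcongr
        _ = Real.exp (cj * (↑(n + 1) : ℝ) - ac * ∑ k ∈ Finset.range (n + 1), ΔT k) * V 0 := by
            rw [Finset.sum_range_succ, ← mul_assoc, ← mul_assoc, ← Real.exp_add, ← Real.exp_add]
            congr 1
            push_cast
            ring
  have bound : ∀ n : ℕ, V n ≤ Real.exp (ac * τ * (n₀ : ℝ)) *
        (Real.exp (-(ac * τ - cj) * (n : ℝ)) * V 0) := by
    intro n
    calc V n ≤ Real.exp (cj * n - ac * ∑ k ∈ Finset.range n, ΔT k) * V 0 := key n
      _ ≤ Real.exp (ac * τ * (n₀ : ℝ)) * (Real.exp (-(ac * τ - cj) * (n : ℝ)) * V 0) := by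
          rw [← mul_assoc, ← Real.exp_add]
          gcongr
          · exact hV 0
          have h := hADT n
          nlinarith [hac]
  refine ⟨bound, ?_⟩
  have h0 : Tendsto (fun n : ℕ => Real.exp (ac * τ * (n₀ : ℝ)) *
      (Real.exp (-(ac * τ - cj) * (n : ℝ)) * V 0)) atTop (nhds 0) := by
    have : Tendsto (fun n : ℕ => Real.exp (-(ac * τ - cj) * (n : ℝ))) atTop (nhds 0) := by
      have heq : ∀ n : ℕ, Real.exp (-(ac * τ - cj) * (n : ℝ)) = (Real.exp (-(ac * τ - cj)))^n := by
        intro n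
        rw [← Real.exp_nat_mul]
        ring_nf
      simp only [heq]
      exact tendsto_pow_atTop_nhds_zero_of_lt_one (Real.exp_pos _).le
        (Real.exp_lt_one_iff.mpr (by linarith))
    have := (this.mul_const (V 0)).const_mul (Real.exp (ac * τ * (n₀ : ℝ)))
    simpa using this
  exact squeeze_zero hV bound h0
end
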